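/- arXiv:2312.13621 — 8 statements merged into one kernel-verified Lean document; each statement's English description precedes it below -/
import Mathlib

section
/- For every choice of signs θ₀, θ₁, θ₂ ∈ {−1, +1} and all ξ, η ∈ ℝ⁴ with η ≠ 0, the Dirac–wave phase p_Θ(ξ, η) = θ₀⟨ξ⟩ − θ₁⟨ξ−η⟩ + θ₂|η| is nonzero. -/
/-- Japanese bracket `⟨x⟩ = √(1 + |x|²)` on `ℝ⁴`. -/
noncomputable def jb (x : EuclideanSpace ℝ (Fin 4)) : ℝ := Real.sqrt (1 + ‖x‖ ^ 2)

lemma norm_lt_jb (x : EuclideanSpace ℝ (Fin 4)) : ‖x‖ < jb x := by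
  have h : ‖x‖ = Real.sqrt (‖x‖ ^ 2) := (Real.sqrt_sq (norm_nonneg x)).symm
  rw [h, jb]
  exact Real.sqrt_lt_sqrt (sq_nonneg _) (by linarith)

lemma jb_sub_lt (a b : EuclideanSpace ℝ (Fin 4)) (h : a ≠ b) :
    jb a - jb b < ‖a - b‖ := by
  have hab : 0 < ‖a - b‖ := by simpa [sub_ne_zero] using h
  rcases le_or_gt ‖a‖ ‖b‖ with hle | hlt
  · have : jb a ≤ jb b := Real.sqrt_le_sqrt (by nlinarith [norm_nonneg a, norm_nonneg b])
    linarith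
  · have h1 : ‖a‖ < jb a := norm_lt_jb a
    have h2 : ‖b‖ < jb b := norm_lt_jb b
    have ha : jb a ^ 2 = 1 + ‖a‖ ^ 2 := Real.sq_sqrt (by positivity)
    have hb : jb b ^ 2 = 1 + ‖b‖ ^ 2 := Real.sq_sqrt (by positivity)
    have key : (jb a - jb b) * (jb a + jb b) = (‖a‖ - ‖b‖) * (‖a‖ + ‖b‖) := by
      ring_nf
      nlinarith [ha, hb]
    have htr : ‖a‖ - ‖b‖ ≤ ‖a - b‖ := norm_sub_norm_le a b
    nlinarith [norm_nonneg a, norm_nonneg b]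

/-- For every choice of signs `θ₀, θ₁, θ₂ ∈ {−1, +1}` and all `ξ, η ∈ ℝ⁴` with `η ≠ 0`,
the Dirac–wave phase `p_Θ(ξ, η) = θ₀⟨ξ⟩ − θ₁⟨ξ−η⟩ + θ₂|η|` is nonzero. -/
theorem dirac_phase_ne_zero (θ₀ θ₁ θ₂ : ℝ)
    (h₀ : θ₀ = -1 ∨ θ₀ = 1) (h₁ : θ₁ = -1 ∨ θ₁ = 1) (h₂ : θ₂ = -1 ∨ θ₂ = 1)
    (ξ η : EuclideanSpace ℝ (Fin 4)) (hη : η ≠ 0) :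
    θ₀ * jb ξ - θ₁ * jb (ξ - η) + θ₂ * ‖η‖ ≠ 0 := by
  have hne : ξ ≠ ξ - η := by
    intro h
    apply hη
    have := congrArg (fun z => ξ - z) h
    simpa using this.symm
  have hA : jb ξ - jb (ξ - η) < ‖η‖ := by
    have := jb_sub_lt ξ (ξ - η) hne
    simpa using this
  have hB : jb (ξ - η) - jb ξ < ‖η‖ := by
    have := jb_sub_lt (ξ - η) ξ hne.symm
    have he : ‖ξ - η - ξ‖ = ‖η‖ := by
      rw [show ξ - η - ξ = -η by abel, norm_neg]
    rwa [he] at this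
  have h1 : ‖ξ‖ < jb ξ := norm_lt_jb ξ
  have h2 : ‖ξ - η‖ < jb (ξ - η) := norm_lt_jb (ξ - η)
  have htr : ‖η‖ ≤ ‖ξ‖ + ‖ξ - η‖ := by
    have := norm_sub_le ξ (ξ - η)
    simpa using this
  have hpos : 0 < ‖η‖ := norm_pos_iff.mpr hη
  rcases h₀ with rfl | rfl <;> rcases h₁ with rfl | rfl <;> rcases h₂ with rfl | rfl <;>
    intro h <;> linarith
end

section
/- Let θ₀, θ₁, θ₂ ∈ {−1, +1} with θ₀ ≠ θ₁. Then for all ξ, η ∈ ℝ⁴, the phase p_Θ(ξ, η) = θ₀⟨ξ⟩ − θ₁⟨ξ−η⟩ + θ₂|η| satisfies the time non-resonance lower bound |p_Θ(ξ, η)| ≥ 1 / (2⟨ξ⟩). -/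
/-- If `θ₀ ≠ θ₁`, then for all `ξ, η ∈ ℝ⁴`, the phase
`p_Θ(ξ, η) = θ₀⟨ξ⟩ − θ₁⟨ξ−η⟩ + θ₂|η|` satisfies the time non-resonance lower bound
`|p_Θ(ξ, η)| ≥ 1 / (2⟨ξ⟩)`. -/
theorem dirac_phase_time_nonresonance_lower_bound (θ₀ θ₁ θ₂ : ℝ)
    (h₀ : θ₀ = -1 ∨ θ₀ = 1) (h₁ : θ₁ = -1 ∨ θ₁ = 1) (h₂ : θ₂ = -1 ∨ θ₂ = 1)
    (hne : θ₀ ≠ θ₁)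
    (ξ η : EuclideanSpace ℝ (Fin 4)) :
    1 / (2 * jb ξ) ≤ |θ₀ * jb ξ - θ₁ * jb (ξ - η) + θ₂ * ‖η‖| := by
  have hA2 : jb ξ ^ 2 = 1 + ‖ξ‖ ^ 2 := Real.sq_sqrt (by positivity)
  have hA1 : (1 : ℝ) ≤ jb ξ := by
    have h : Real.sqrt 1 ≤ Real.sqrt (1 + ‖ξ‖ ^ 2) :=
      Real.sqrt_le_sqrt (by nlinarith [sq_nonneg ‖ξ‖])
    simpa [jb, Real.sqrt_one] using h
  have hAξ : ‖ξ‖ ≤ jb ξ := by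
    have h := Real.sqrt_le_sqrt (show ‖ξ‖ ^ 2 ≤ 1 + ‖ξ‖ ^ 2 by linarith)
    simpa [jb, Real.sqrt_sq (norm_nonneg ξ)] using h
  have hB : ‖ξ - η‖ ≤ jb (ξ - η) := by
    have h := Real.sqrt_le_sqrt (show ‖ξ - η‖ ^ 2 ≤ 1 + ‖ξ - η‖ ^ 2 by linarith)
    simpa [jb, Real.sqrt_sq (norm_nonneg (ξ - η))] using h
  have htri : ‖η‖ - ‖ξ‖ ≤ ‖ξ - η‖ := by
    have h := norm_sub_norm_le η ξ
    rwa [norm_sub_rev η ξ] at h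
  have hApos : (0 : ℝ) < jb ξ := by linarith
  have hkey : 1 / (2 * jb ξ) ≤ jb ξ - ‖ξ‖ := by
    rw [div_le_iff₀ (by linarith)]
    nlinarith [sq_nonneg (jb ξ - ‖ξ‖)]
  have hpos : (0 : ℝ) < 1 / (2 * jb ξ) := by positivity
  have hC : (0 : ℝ) ≤ ‖η‖ := norm_nonneg _
  have hlow : jb ξ - ‖ξ‖ ≤ jb ξ + jb (ξ - η) - ‖η‖ := by linarith
  have hθ₁ : θ₁ = -θ₀ := by
    rcases h₀ with rfl | rfl <;> rcases h₁ with rfl | rfl <;> simp_all <;> norm_num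
  subst hθ₁
  rcases h₀ with rfl | rfl <;> rcases h₂ with rfl | rfl <;> rw [le_abs] <;>
    first
      | exact Or.inl (by linarith)
      | exact Or.inr (by linarith)
end

section
/- For all signs θ₁, θ₂ ∈ {−1, +1} and all ξ, η ∈ ℝ⁴ with η ≠ 0, the η-gradient of the phase p_Θ(ξ, η) = θ₀⟨ξ⟩ − θ₁⟨ξ−η⟩ + θ₂|η|, namely ∇_η p_Θ(ξ, η) = θ₁ (ξ−η)/⟨ξ−η⟩ + θ₂ η/|η|, satisfies the space non-resonance lower bound ‖θ₁ (ξ−η)/⟨ξ−η⟩ + θ₂ η/|η|‖ ≥ 1 / (2⟨ξ−η⟩²). In particular the space resonant set of p_Θ contains no point with η ≠ 0. -/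
lemma one_div_two_mul_one_add_sq_le_one_sub_div_sqrt {r : ℝ} (hr : 0 ≤ r) :
    1 / (2 * (1 + r ^ 2)) ≤ 1 - r / √(1 + r ^ 2) := by
  set s := √(1 + r ^ 2)
  have hs_sq : s ^ 2 = 1 + r ^ 2 := Real.sq_sqrt (by positivity)
  have hs : 0 < s := by positivity
  have hrs : r ≤ s := Real.le_sqrt_of_sq_le (by linarith)
  rw [← hs_sq, one_sub_div hs.ne', div_le_div_iff₀ (by positivity) hs]
  nlinarith [mul_nonneg (sub_nonneg.2 hrs) hs.le]

section NormedSpace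

variable {E : Type*} [NormedAddCommGroup E] [NormedSpace ℝ E]

lemma norm_div_norm_smul_self {θ : ℝ} (hθ : |θ| = 1) {x : E} (hx : x ≠ 0) :
    ‖(θ / ‖x‖) • x‖ = 1 := by
  rw [norm_smul, norm_div, Real.norm_eq_abs, hθ, norm_norm,
    one_div_mul_cancel (norm_ne_zero_iff.2 hx)]

lemma norm_div_smul_le {θ : ℝ} (hθ : |θ| ≤ 1) {c : ℝ} (hc : 0 < c) (x : E) :
    ‖(θ / c) • x‖ ≤ ‖x‖ / c := by
  rw [norm_smul, norm_div, Real.norm_eq_abs, Real.norm_of_nonneg hc.le, div_mul_eq_mul_div]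
  gcongr
  exact mul_le_of_le_one_left (norm_nonneg x) hθ

end NormedSpace

lemma abs_eq_one_of_eq_neg_one_or_eq_one {θ : ℝ} (h : θ = -1 ∨ θ = 1) : |θ| = 1 := by
  rcases h with rfl | rfl <;> simp

/-- For all signs `θ₁, θ₂ ∈ {−1, +1}` and all `ξ, η ∈ ℝ⁴` with `η ≠ 0`, the η-gradient of
the Dirac phase, `∇_η p_Θ(ξ, η) = θ₁ (ξ−η)/⟨ξ−η⟩ + θ₂ η/|η|`, satisfies the space
non-resonance lower bound `‖θ₁ (ξ−η)/⟨ξ−η⟩ + θ₂ η/|η|‖ ≥ 1 / (2⟨ξ−η⟩²)`. -/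
theorem dirac_phase_space_nonresonance_lower_bound (θ₁ θ₂ : ℝ)
    (h₁ : θ₁ = -1 ∨ θ₁ = 1) (h₂ : θ₂ = -1 ∨ θ₂ = 1)
    (ξ η : EuclideanSpace ℝ (Fin 4)) (hη : η ≠ 0) :
    1 / (2 * (jb (ξ - η)) ^ 2)
      ≤ ‖(θ₁ / jb (ξ - η)) • (ξ - η) + (θ₂ / ‖η‖) • η‖ := by
  set v := ξ - η
  have hjb_pos : 0 < jb v := Real.sqrt_pos.2 (by positivity)
  calc 1 / (2 * jb v ^ 2)
      = 1 / (2 * (1 + ‖v‖ ^ 2)) := by rw [jb, Real.sq_sqrt (by positivity)]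
    _ ≤ 1 - ‖v‖ / jb v := one_div_two_mul_one_add_sq_le_one_sub_div_sqrt (norm_nonneg v)
    _ ≤ ‖(θ₂ / ‖η‖) • η‖ - ‖(θ₁ / jb v) • v‖ := by
      rw [norm_div_norm_smul_self (abs_eq_one_of_eq_neg_one_or_eq_one h₂) hη]
      gcongr
      exact norm_div_smul_le (abs_eq_one_of_eq_neg_one_or_eq_one h₁).le hjb_pos v
    _ ≤ ‖(θ₁ / jb v) • v + (θ₂ / ‖η‖) • η‖ := by
      rw [add_comm]
      exact norm_sub_le_norm_add _ _
end

section
/- Let θ₀, θ₁, θ₂ ∈ {−1, +1} with θ₀ = θ₁. Then the time resonant set of p_Θ is exactly the hyperplane {η = 0}: for all ξ, η ∈ ℝ⁴, p_Θ(ξ, η) = θ₀⟨ξ⟩ − θ₁⟨ξ−η⟩ + θ₂|η| = 0 if and only if η = 0. -/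
lemma jb_lt_add (x y : EuclideanSpace ℝ (Fin 4)) (h : x ≠ y) :
    jb x < jb y + ‖x - y‖ := by
  have hc : 0 < ‖x - y‖ := by
    simpa [sub_eq_zero] using h
  have ha : ‖x‖ ≤ ‖y‖ + ‖x - y‖ := by
    have := norm_sub_norm_le x y
    have h2 := abs_le.mp (le_of_eq rfl : |‖x‖ - ‖y‖| ≤ |‖x‖ - ‖y‖|)
    linarith [abs_le.mp (le_refl |‖x‖ - ‖y‖|) , this]
  have hb : (0:ℝ) ≤ ‖y‖ := norm_nonneg _
  have ha0 : (0:ℝ) ≤ ‖x‖ := norm_nonneg _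
  have hs : Real.sqrt (1 + ‖y‖ ^ 2) ^ 2 = 1 + ‖y‖ ^ 2 :=
    Real.sq_sqrt (by positivity)
  have hs0 : 0 < Real.sqrt (1 + ‖y‖ ^ 2) := Real.sqrt_pos.mpr (by positivity)
  have hbs : ‖y‖ < Real.sqrt (1 + ‖y‖ ^ 2) := by
    nlinarith
  unfold jb
  rw [Real.sqrt_lt' (by positivity)]
  nlinarith

/-- If `θ₀ = θ₁`, the time resonant set of `p_Θ` is exactly the hyperplane `{η = 0}`:
for all `ξ, η ∈ ℝ⁴`, `p_Θ(ξ, η) = θ₀⟨ξ⟩ − θ₁⟨ξ−η⟩ + θ₂|η| = 0` iff `η = 0`. -/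
theorem dirac_phase_time_resonant_set (θ₀ θ₁ θ₂ : ℝ)
    (h₀ : θ₀ = -1 ∨ θ₀ = 1) (h₁ : θ₁ = -1 ∨ θ₁ = 1) (h₂ : θ₂ = -1 ∨ θ₂ = 1)
    (heq : θ₀ = θ₁)
    (ξ η : EuclideanSpace ℝ (Fin 4)) :
    θ₀ * jb ξ - θ₁ * jb (ξ - η) + θ₂ * ‖η‖ = 0 ↔ η = 0 := by
  constructor
  · intro h
    by_contra hη
    have hc : 0 < ‖η‖ := norm_pos_iff.mpr hη
    have h1 : jb ξ < jb (ξ - η) + ‖η‖ := by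
      have := jb_lt_add ξ (ξ - η) (fun hxy => hη (sub_eq_self.mp hxy.symm))
      simpa using this
    have h2 : jb (ξ - η) < jb ξ + ‖η‖ := by
      have := jb_lt_add (ξ - η) ξ (fun hxy => hη (sub_eq_self.mp hxy))
      simpa [norm_sub_rev] using this
    subst heq
    rcases h₀ with rfl | rfl <;> rcases h₂ with h2' | h2' <;> rw [h2'] at h <;> nlinarith
  · rintro rfl
    simp [heq]
end

section
/- Let κ₀, κ₁, κ₂ ∈ {−1, +1} with κ₁ ≠ κ₂. Then for all ξ, η ∈ ℝ⁴, the phase q_K(ξ, η) = −κ₀|ξ| − κ₁⟨ξ+η⟩ + κ₂⟨η⟩ satisfies |q_K(ξ, η)| ≥ 1 / (2⟨η⟩); in particular q_K never vanishes. -/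
lemma jb_ge_one (x : EuclideanSpace ℝ (Fin 4)) : (1:ℝ) ≤ jb x := by
  unfold jb
  rw [Real.le_sqrt zero_le_one]
  · nlinarith [sq_nonneg ‖x‖]
  · positivity

lemma jb_ge_norm (x : EuclideanSpace ℝ (Fin 4)) : ‖x‖ ≤ jb x := by
  unfold jb
  rw [Real.le_sqrt (norm_nonneg x)]
  · linarith
  · positivity

lemma jb_sq (x : EuclideanSpace ℝ (Fin 4)) : jb x ^ 2 = 1 + ‖x‖ ^ 2 :=
  Real.sq_sqrt (by positivity)

/-- If `κ₁ ≠ κ₂`, then for all `ξ, η ∈ ℝ⁴`, the phase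
`q_K(ξ, η) = −κ₀|ξ| − κ₁⟨ξ+η⟩ + κ₂⟨η⟩` satisfies `|q_K(ξ, η)| ≥ 1 / (2⟨η⟩)`;
in particular `q_K` never vanishes. -/
theorem maxwell_phase_time_nonresonance_lower_bound (κ₀ κ₁ κ₂ : ℝ)
    (h₀ : κ₀ = -1 ∨ κ₀ = 1) (h₁ : κ₁ = -1 ∨ κ₁ = 1) (h₂ : κ₂ = -1 ∨ κ₂ = 1)
    (hne : κ₁ ≠ κ₂)
    (ξ η : EuclideanSpace ℝ (Fin 4)) :
    1 / (2 * jb η) ≤ |(-κ₀) * ‖ξ‖ - κ₁ * jb (ξ + η) + κ₂ * jb η| ∧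
      (-κ₀) * ‖ξ‖ - κ₁ * jb (ξ + η) + κ₂ * jb η ≠ 0 := by
  have hc1 := jb_ge_one η
  have hcn := jb_ge_norm η
  have hb := jb_ge_norm (ξ + η)
  have hsq := jb_sq η
  have hpos : 0 < jb η := by linarith
  have hba : ‖ξ‖ - ‖η‖ ≤ ‖ξ + η‖ := by
    have := norm_add_le (ξ + η) (-η)
    simpa using this
  have hkey : 1 / (2 * jb η) ≤ jb (ξ + η) + jb η - ‖ξ‖ := by
    have h1 : (jb η - ‖η‖) * (jb η + ‖η‖) = 1 := by nlinarith
    have h2 : 1 / (2 * jb η) ≤ jb η - ‖η‖ := by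
      rw [div_le_iff₀ (by linarith)]
      nlinarith [norm_nonneg η]
    linarith
  have hlb : 1 / (2 * jb η) ≤ |(-κ₀) * ‖ξ‖ - κ₁ * jb (ξ + η) + κ₂ * jb η| := by
    have hk0 : -‖ξ‖ ≤ (-κ₀) * ‖ξ‖ ∧ (-κ₀) * ‖ξ‖ ≤ ‖ξ‖ := by
      rcases h₀ with h | h <;> subst h <;>
        constructor <;> simp [neg_neg] <;> linarith [norm_nonneg ξ]
    rcases h₁ with h1' | h1' <;> rcases h₂ with h2' | h2' <;> subst h1' <;> subst h2' <;>
      first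
      | (exact absurd rfl hne)
      | (rw [abs_of_pos (by nlinarith [hk0.1, hk0.2, hpos])]; nlinarith [hk0.1, hk0.2])
      | (rw [abs_of_neg (by nlinarith [hk0.1, hk0.2, hpos])]; nlinarith [hk0.1, hk0.2])
  refine ⟨hlb, fun h => ?_⟩
  rw [h, abs_zero] at hlb
  have : 0 < 1 / (2 * jb η) := by positivity
  linarith
end

section
/- Let κ₀, κ₁, κ₂ ∈ {−1, +1} with κ₁ = κ₂. Then the time resonant set of q_K is exactly {ξ = 0}: for all ξ, η ∈ ℝ⁴, q_K(ξ, η) = −κ₀|ξ| − κ₁⟨ξ+η⟩ + κ₂⟨η⟩ = 0 if and only if ξ = 0. -/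
/-! On the resonant set with `κ₁ = κ₂` and `|κ₀| = |κ₁| = 1` we get `|⟨ξ+η⟩ - ⟨η⟩| = |ξ|`.
But `⟨·⟩` is strictly 1-Lipschitz: rationalising, `⟨a⟩ - ⟨b⟩ = (|a| - |b|)(|a| + |b|) / (⟨a⟩ + ⟨b⟩)`
with `|a| + |b| < ⟨a⟩ + ⟨b⟩`, so `|⟨ξ+η⟩ - ⟨η⟩| < |ξ|` unless `ξ = 0`. -/

open Real

theorem abs_sqrt_one_add_sq_sub_lt {s t : ℝ} (hst : s ≠ t) :
    |√(1 + s ^ 2) - √(1 + t ^ 2)| < |s - t| := by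
  have hs : |s| < √(1 + s ^ 2) := by
    rw [← sqrt_sq_eq_abs]; exact sqrt_lt_sqrt (sq_nonneg s) (by linarith)
  have ht : |t| < √(1 + t ^ 2) := by
    rw [← sqrt_sq_eq_abs]; exact sqrt_lt_sqrt (sq_nonneg t) (by linarith)
  have hsum : |s + t| < √(1 + s ^ 2) + √(1 + t ^ 2) :=
    (abs_add_le s t).trans_lt (add_lt_add hs ht)
  have hpos : 0 < √(1 + s ^ 2) + √(1 + t ^ 2) := (abs_nonneg _).trans_lt hsum
  have hprod : (√(1 + s ^ 2) - √(1 + t ^ 2)) * (√(1 + s ^ 2) + √(1 + t ^ 2))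
      = (s - t) * (s + t) := by
    rw [mul_comm, ← sq_sub_sq, sq_sqrt (by positivity), sq_sqrt (by positivity)]; ring
  rw [← mul_lt_mul_iff_of_pos_right hpos]
  calc |√(1 + s ^ 2) - √(1 + t ^ 2)| * (√(1 + s ^ 2) + √(1 + t ^ 2))
      = |s - t| * |s + t| := by rw [← abs_of_pos hpos, ← abs_mul, hprod, abs_mul]
    _ < |s - t| * (√(1 + s ^ 2) + √(1 + t ^ 2)) :=
      mul_lt_mul_of_pos_left hsum (abs_pos.2 (sub_ne_zero.2 hst))

theorem abs_sqrt_one_add_norm_sq_sub_lt {E : Type*} [NormedAddCommGroup E] {a b : E}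
    (hab : a ≠ b) : |√(1 + ‖a‖ ^ 2) - √(1 + ‖b‖ ^ 2)| < ‖a - b‖ := by
  by_cases hn : ‖a‖ = ‖b‖
  · rw [hn, sub_self, abs_zero]
    exact norm_pos_iff.2 (sub_ne_zero.2 hab)
  · exact (abs_sqrt_one_add_sq_sub_lt hn).trans_le (abs_norm_sub_norm_le a b)

theorem abs_jb_add_sub_jb_lt {ξ : EuclideanSpace ℝ (Fin 4)} (hξ : ξ ≠ 0)
    (η : EuclideanSpace ℝ (Fin 4)) : |jb (ξ + η) - jb η| < ‖ξ‖ := by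
  simpa [jb] using abs_sqrt_one_add_norm_sq_sub_lt (add_ne_right.2 hξ : ξ + η ≠ η)

theorem maxwell_phase_time_resonant_set_general (κ₀ κ₁ κ₂ : ℝ)
    (h₀ : κ₀ = -1 ∨ κ₀ = 1) (h₁ : κ₁ = -1 ∨ κ₁ = 1)
    (heq : κ₁ = κ₂)
    (ξ η : EuclideanSpace ℝ (Fin 4)) :
    (-κ₀) * ‖ξ‖ - κ₁ * jb (ξ + η) + κ₂ * jb η = 0 ↔ ξ = 0 := by
  subst heq
  constructor
  · intro h
    by_contra hξ
    have habs₀ : |κ₀| = 1 := (abs_eq zero_le_one).2 h₀.symm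
    have habs₁ : |κ₁| = 1 := (abs_eq zero_le_one).2 h₁.symm
    have hres : κ₁ * (jb (ξ + η) - jb η) = -κ₀ * ‖ξ‖ := by linarith
    have hnorm : |jb (ξ + η) - jb η| = ‖ξ‖ := by
      simpa [abs_mul, habs₀, habs₁] using congrArg abs hres
    exact (abs_jb_add_sub_jb_lt hξ η).ne hnorm
  · rintro rfl
    simp

/-- If `κ₁ = κ₂`, the time resonant set of `q_K` is exactly `{ξ = 0}`:
for all `ξ, η ∈ ℝ⁴`, `q_K(ξ, η) = −κ₀|ξ| − κ₁⟨ξ+η⟩ + κ₂⟨η⟩ = 0` iff `ξ = 0`. -/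
theorem maxwell_phase_time_resonant_set (κ₀ κ₁ κ₂ : ℝ)
    (h₀ : κ₀ = -1 ∨ κ₀ = 1) (h₁ : κ₁ = -1 ∨ κ₁ = 1) (h₂ : κ₂ = -1 ∨ κ₂ = 1)
    (heq : κ₁ = κ₂)
    (ξ η : EuclideanSpace ℝ (Fin 4)) :
    (-κ₀) * ‖ξ‖ - κ₁ * jb (ξ + η) + κ₂ * jb η = 0 ↔ ξ = 0 :=
  maxwell_phase_time_resonant_set_general κ₀ κ₁ κ₂ h₀ h₁ heq ξ η
end

section
/- For all a, b ∈ ℝ⁴, the map x ↦ x/⟨x⟩ satisfies the quantitative monotonicity lower bound ‖a/⟨a⟩ − b/⟨b⟩‖ ≥ ‖a − b‖ / max(⟨a⟩, ⟨b⟩)³. In particular, taking a = η and b = ξ+η, for signs κ₁ = κ₂ the gradient ∇_η q_K(ξ, η) = κ₁(η/⟨η⟩ − (ξ+η)/⟨ξ+η⟩) satisfies ‖∇_η q_K(ξ, η)‖ ≥ |ξ| / max(⟨η⟩, ⟨ξ+η⟩)³. -/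
open Real RealInnerProductSpace

lemma one_add_mul_le_sqrt_one_add_sq_mul (u v : ℝ) :
    1 + u * v ≤ √(1 + u ^ 2) * √(1 + v ^ 2) := by
  rw [← sqrt_mul (by positivity)]
  exact le_sqrt_of_sq_le (by nlinarith [sq_nonneg (u - v)])

lemma sub_le_sqrt_one_add_sq_mul_sub {u v : ℝ} (hu : 0 ≤ u) (huv : u ≤ v) :
    v - u ≤ √(1 + v ^ 2) * (√(1 + u ^ 2) * v - √(1 + v ^ 2) * u) := by
  have hAB := one_add_mul_le_sqrt_one_add_sq_mul u v
  have hB : √(1 + v ^ 2) ^ 2 = 1 + v ^ 2 := sq_sqrt (by positivity)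
  nlinarith [mul_le_mul_of_nonneg_right hAB (hu.trans huv)]

section InnerProductSpace

variable {E : Type*} [NormedAddCommGroup E] [InnerProductSpace ℝ E]

lemma norm_sub_le_sqrt_one_add_sq_mul_norm_smul_sub_smul {a b : E} (hab : ‖a‖ ≤ ‖b‖) :
    ‖a - b‖ ≤ √(1 + ‖b‖ ^ 2) * ‖√(1 + ‖b‖ ^ 2) • a - √(1 + ‖a‖ ^ 2) • b‖ := by
  set A := √(1 + ‖a‖ ^ 2)
  set B := √(1 + ‖b‖ ^ 2)
  have hA : 1 ≤ A := one_le_sqrt.2 (by simp)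
  have hB : 1 ≤ B := one_le_sqrt.2 (by simp)
  have hW : ‖B • a - A • b‖ ^ 2 = B ^ 2 * ‖a‖ ^ 2 - 2 * (A * B) * ⟪a, b⟫ + A ^ 2 * ‖b‖ ^ 2 := by
    rw [norm_sub_sq_real, norm_smul, norm_smul, real_inner_smul_left, real_inner_smul_right,
      norm_of_nonneg (by positivity), norm_of_nonneg (by positivity)]
    ring
  have hcol := sub_le_sqrt_one_add_sq_mul_sub (norm_nonneg a) hab
  have hcol_sq : (‖b‖ - ‖a‖) ^ 2 ≤ (B * (A * ‖b‖ - B * ‖a‖)) ^ 2 :=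
    pow_le_pow_left₀ (by linarith) hcol 2
  have hslope : ⟪a, b⟫ * (A * B ^ 3 - 1) ≤ ‖a‖ * ‖b‖ * (A * B ^ 3 - 1) :=
    mul_le_mul_of_nonneg_right (real_inner_le_norm a b) (by nlinarith [one_le_pow₀ (n := 3) hB])
  refine le_of_sq_le_sq ?_ (by positivity)
  rw [mul_pow, hW, norm_sub_sq_real]
  nlinarith

lemma norm_sub_le_mul_norm_inv_smul_sub_inv_smul {a b : E} (hab : ‖a‖ ≤ ‖b‖) :
    ‖a - b‖ ≤ √(1 + ‖a‖ ^ 2) * √(1 + ‖b‖ ^ 2) ^ 2 *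
      ‖(√(1 + ‖a‖ ^ 2))⁻¹ • a - (√(1 + ‖b‖ ^ 2))⁻¹ • b‖ := by
  set A := √(1 + ‖a‖ ^ 2)
  set B := √(1 + ‖b‖ ^ 2)
  have hA : 0 < A := sqrt_pos.2 (by positivity)
  have hB : 0 < B := sqrt_pos.2 (by positivity)
  have hnormalize : A⁻¹ • a - B⁻¹ • b = (A * B)⁻¹ • (B • a - A • b) := by
    rw [smul_sub, smul_smul, smul_smul]
    congr 2 <;> field_simp
  calc ‖a - b‖ ≤ B * ‖B • a - A • b‖ := norm_sub_le_sqrt_one_add_sq_mul_norm_smul_sub_smul hab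
    _ = A * B ^ 2 * ‖A⁻¹ • a - B⁻¹ • b‖ := by
      rw [hnormalize, norm_smul, norm_inv, norm_of_nonneg (by positivity)]
      field_simp

lemma norm_sub_div_max_pow_three_le_norm_inv_smul_sub_inv_smul (a b : E) :
    ‖a - b‖ / max √(1 + ‖a‖ ^ 2) √(1 + ‖b‖ ^ 2) ^ 3 ≤
      ‖(√(1 + ‖a‖ ^ 2))⁻¹ • a - (√(1 + ‖b‖ ^ 2))⁻¹ • b‖ := by
  wlog hab : ‖a‖ ≤ ‖b‖ generalizing a b
  · rw [norm_sub_rev, max_comm, norm_sub_rev _ (_ • b)]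
    exact this b a (le_of_not_ge hab)
  set A := √(1 + ‖a‖ ^ 2)
  set B := √(1 + ‖b‖ ^ 2)
  have hA : 0 < A := sqrt_pos.2 (by positivity)
  have hAB : A ≤ B := sqrt_le_sqrt (by gcongr)
  rw [max_eq_right hAB, div_le_iff₀ (by positivity)]
  calc ‖a - b‖ ≤ A * B ^ 2 * ‖A⁻¹ • a - B⁻¹ • b‖ := norm_sub_le_mul_norm_inv_smul_sub_inv_smul hab
    _ ≤ B * B ^ 2 * ‖A⁻¹ • a - B⁻¹ • b‖ := by gcongr
    _ = ‖A⁻¹ • a - B⁻¹ • b‖ * B ^ 3 := by ring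

end InnerProductSpace

/-- For all `a, b ∈ ℝ⁴`, the map `x ↦ x/⟨x⟩` satisfies the quantitative monotonicity
lower bound `‖a/⟨a⟩ − b/⟨b⟩‖ ≥ ‖a − b‖ / max(⟨a⟩, ⟨b⟩)³`. In particular, taking
`a = η`, `b = ξ+η`, for signs `κ₁ = κ₂` the gradient
`∇_η q_K(ξ, η) = κ₁(η/⟨η⟩ − (ξ+η)/⟨ξ+η⟩)` satisfies
`‖∇_η q_K(ξ, η)‖ ≥ |ξ| / max(⟨η⟩, ⟨ξ+η⟩)³`. -/
theorem jb_normalization_lower_bound :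
    (∀ a b : EuclideanSpace ℝ (Fin 4),
      ‖a - b‖ / (max (jb a) (jb b)) ^ 3 ≤ ‖(jb a)⁻¹ • a - (jb b)⁻¹ • b‖) ∧
    (∀ κ₁ κ₂ : ℝ, (κ₁ = -1 ∨ κ₁ = 1) → (κ₂ = -1 ∨ κ₂ = 1) → κ₁ = κ₂ →
      ∀ ξ η : EuclideanSpace ℝ (Fin 4),
        ‖ξ‖ / (max (jb η) (jb (ξ + η))) ^ 3
          ≤ ‖κ₁ • ((jb η)⁻¹ • η - (jb (ξ + η))⁻¹ • (ξ + η))‖) := by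
  refine ⟨norm_sub_div_max_pow_three_le_norm_inv_smul_sub_inv_smul, ?_⟩
  intro κ₁ κ₂ hκ₁ _ _ ξ η
  have hκ₁_abs : |κ₁| = 1 := by rcases hκ₁ with rfl | rfl <;> simp
  have h := norm_sub_div_max_pow_three_le_norm_inv_smul_sub_inv_smul η (ξ + η)
  rw [sub_add_cancel_right, norm_neg] at h
  rw [norm_smul, norm_eq_abs, hκ₁_abs, one_mul]
  exact h
end

section
/- Let κ₀, κ₁, κ₂ ∈ {−1, +1} with κ₁ = κ₂. Then for all ξ, η ∈ ℝ⁴, the gradient ∇_η q_K(ξ, η) = κ₁(η/⟨η⟩ − (ξ+η)/⟨ξ+η⟩) vanishes if and only if ξ = 0; that is, the space resonant set of q_K is {(ξ, η) : ξ = 0}, which coincides with its time resonant set and with its space-time resonant set. -/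
open Function

section JapaneseBracket

variable {E : Type*} [NormedAddCommGroup E]

lemma sq_sqrt_one_add_norm_sq (x : E) : √(1 + ‖x‖ ^ 2) ^ 2 = 1 + ‖x‖ ^ 2 :=
  Real.sq_sqrt (by positivity)

lemma norm_lt_sqrt_one_add_norm_sq (x : E) : ‖x‖ < √(1 + ‖x‖ ^ 2) :=
  (Real.lt_sqrt (norm_nonneg x)).2 (by linarith)

lemma injective_inv_sqrt_one_add_norm_sq_smul [NormedSpace ℝ E] :
    Injective fun x : E => (√(1 + ‖x‖ ^ 2))⁻¹ • x := by
  intro x y hxy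
  have hx : 0 < √(1 + ‖x‖ ^ 2) := by positivity
  have hy : 0 < √(1 + ‖y‖ ^ 2) := by positivity
  have hnorm : ‖x‖ / √(1 + ‖x‖ ^ 2) = ‖y‖ / √(1 + ‖y‖ ^ 2) := by
    simpa [norm_smul, div_eq_inv_mul, abs_of_pos hx, abs_of_pos hy] using congrArg norm hxy
  have hsq : ‖x‖ ^ 2 = ‖y‖ ^ 2 := by
    have := congrArg (· ^ 2) hnorm
    simp only [div_pow, sq_sqrt_one_add_norm_sq] at this
    field_simp at this
    linarith
  have hbracket : √(1 + ‖x‖ ^ 2) = √(1 + ‖y‖ ^ 2) := by rw [hsq]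
  simp only [hbracket] at hxy
  exact smul_right_injective E (inv_ne_zero hy.ne') hxy

lemma abs_sqrt_one_add_norm_sq_sub_lt_s10 {x y : E} (hxy : x ≠ y) :
    |√(1 + ‖x‖ ^ 2) - √(1 + ‖y‖ ^ 2)| < ‖x - y‖ := by
  set A := √(1 + ‖x‖ ^ 2)
  set B := √(1 + ‖y‖ ^ 2)
  have hA := norm_lt_sqrt_one_add_norm_sq x
  have hB := norm_lt_sqrt_one_add_norm_sq y
  have hd : 0 < ‖x - y‖ := norm_pos_iff.2 (sub_ne_zero.2 hxy)
  have hAB : 0 < A + B := by linarith [norm_nonneg x, norm_nonneg y]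
  have hdiff : (A - B) * (A + B) = (‖x‖ - ‖y‖) * (‖x‖ + ‖y‖) := by
    linear_combination sq_sqrt_one_add_norm_sq x - sq_sqrt_one_add_norm_sq y
  have key : |A - B| * (A + B) < ‖x - y‖ * (A + B) := calc
    |A - B| * (A + B) = |‖x‖ - ‖y‖| * (‖x‖ + ‖y‖) := by
      rw [← abs_of_pos hAB, ← abs_mul, hdiff, abs_mul,
        abs_of_nonneg (by positivity : 0 ≤ ‖x‖ + ‖y‖)]
    _ ≤ ‖x - y‖ * (‖x‖ + ‖y‖) := by gcongr; exact abs_norm_sub_norm_le x y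
    _ < ‖x - y‖ * (A + B) := by gcongr
  exact lt_of_mul_lt_mul_right key hAB.le

end JapaneseBracket

lemma inv_jb_smul_injective : Injective fun x => (jb x)⁻¹ • x :=
  injective_inv_sqrt_one_add_norm_sq_smul

lemma gradient_eq_zero_iff {κ : ℝ} (hκ : κ ≠ 0) (ξ η : EuclideanSpace ℝ (Fin 4)) :
    (-κ / jb (ξ + η)) • (ξ + η) + (κ / jb η) • η = 0 ↔ ξ = 0 := by
  have hgrad : (-κ / jb (ξ + η)) • (ξ + η) + (κ / jb η) • η =
      κ • ((jb η)⁻¹ • η - (jb (ξ + η))⁻¹ • (ξ + η)) := by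
    simp only [smul_sub, smul_smul, div_eq_mul_inv, neg_mul, neg_smul]
    abel
  rw [hgrad, smul_eq_zero, or_iff_right hκ, sub_eq_zero, inv_jb_smul_injective.eq_iff,
    right_eq_add]

lemma phase_eq_zero_iff {κ₀ κ₁ : ℝ} (h₀ : |κ₀| = 1) (h₁ : |κ₁| = 1)
    (ξ η : EuclideanSpace ℝ (Fin 4)) :
    -κ₀ * ‖ξ‖ - κ₁ * jb (ξ + η) + κ₁ * jb η = 0 ↔ ξ = 0 := by
  refine ⟨fun hphase => ?_, fun hξ => by simp [hξ]⟩
  by_contra hξ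
  have hlip : |jb (ξ + η) - jb η| < ‖ξ‖ := by
    simpa [jb] using abs_sqrt_one_add_norm_sq_sub_lt_s10 (x := ξ + η) (y := η) (by simpa using hξ)
  have hnorm : ‖ξ‖ = |jb (ξ + η) - jb η| := calc
    ‖ξ‖ = |-κ₀ * ‖ξ‖| := by rw [abs_mul, abs_neg, h₀, abs_norm, one_mul]
    _ = |κ₁ * (jb (ξ + η) - jb η)| := by congr 1; linear_combination hphase
    _ = |jb (ξ + η) - jb η| := by rw [abs_mul, h₁, one_mul]
  linarith

theorem maxwell_phase_space_resonant_set_res_general (κ₀ κ₁ κ₂ : ℝ)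
    (h₀ : κ₀ = -1 ∨ κ₀ = 1) (h₁ : κ₁ = -1 ∨ κ₁ = 1)
    (heq : κ₁ = κ₂)
    (ξ η : EuclideanSpace ℝ (Fin 4)) :
    ((-κ₁ / jb (ξ + η)) • (ξ + η) + (κ₂ / jb η) • η = 0 ↔ ξ = 0) ∧
    ((-κ₁ / jb (ξ + η)) • (ξ + η) + (κ₂ / jb η) • η = 0 ↔
      (-κ₀) * ‖ξ‖ - κ₁ * jb (ξ + η) + κ₂ * jb η = 0) := by
  subst heq
  have habs₀ : |κ₀| = 1 := (abs_eq zero_le_one).2 h₀.symm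
  have habs₁ : |κ₁| = 1 := (abs_eq zero_le_one).2 h₁.symm
  have hκ₁ : κ₁ ≠ 0 := by rintro rfl; simp at habs₁
  have hgrad := gradient_eq_zero_iff hκ₁ ξ η
  exact ⟨hgrad, hgrad.trans (phase_eq_zero_iff habs₀ habs₁ ξ η).symm⟩

/-- If `κ₁ = κ₂`, then for all `ξ, η ∈ ℝ⁴` the gradient
`∇_η q_K(ξ, η) = κ₁(η/⟨η⟩ − (ξ+η)/⟨ξ+η⟩)` vanishes iff `ξ = 0`: the space resonant set
of `q_K` is `{(ξ, η) : ξ = 0}`, which coincides with its time resonant set (hence with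
the space-time resonant set). -/
theorem maxwell_phase_space_resonant_set_res (κ₀ κ₁ κ₂ : ℝ)
    (h₀ : κ₀ = -1 ∨ κ₀ = 1) (h₁ : κ₁ = -1 ∨ κ₁ = 1) (h₂ : κ₂ = -1 ∨ κ₂ = 1)
    (heq : κ₁ = κ₂)
    (ξ η : EuclideanSpace ℝ (Fin 4)) :
    ((-κ₁ / jb (ξ + η)) • (ξ + η) + (κ₂ / jb η) • η = 0 ↔ ξ = 0) ∧
    ((-κ₁ / jb (ξ + η)) • (ξ + η) + (κ₂ / jb η) • η = 0 ↔
      (-κ₀) * ‖ξ‖ - κ₁ * jb (ξ + η) + κ₂ * jb η = 0) :=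
  maxwell_phase_space_resonant_set_res_general κ₀ κ₁ κ₂ h₀ h₁ heq ξ η
end
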